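/- arXiv:2110.14669 — 4 statements merged into one kernel-verified Lean document; each statement's English description precedes it below -/
import Mathlib

section
/- First law of entanglement: for a fixed full-rank density matrix σ and a smooth one-parameter family ρ(ε) of density matrices with ρ(0) = σ, the first derivative at ε = 0 of the relative entropy S(ρ(ε)‖σ) vanishes; equivalently, the first-order variation of the von Neumann entropy equals the first-order variation of the expectation value of the modular Hamiltonian H_σ = -log σ: d/dε S(ρ(ε))|₀ = d/dε Tr[ρ(ε) H_σ]|₀. -/
open Matrix Kronecker
open scoped ComplexOrder

noncomputable def cfcH {n : Type*} [Fintype n] [DecidableEq n]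
    (f : ℝ → ℝ) (A : Matrix n n ℂ) : Matrix n n ℂ :=
  if hA : A.IsHermitian then
    (hA.eigenvectorUnitary : Matrix n n ℂ) *
      Matrix.diagonal (fun i => (f (hA.eigenvalues i) : ℂ)) *
      star (hA.eigenvectorUnitary : Matrix n n ℂ)
  else 0

/-- Functional-calculus logarithm of a Hermitian matrix (0 on the kernel). -/
noncomputable def matLog {n : Type*} [Fintype n] [DecidableEq n]
    (A : Matrix n n ℂ) : Matrix n n ℂ := cfcH Real.log A

/-- Von Neumann entropy `S(ρ) = -Tr[ρ log ρ]`. -/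
noncomputable def vN {n : Type*} [Fintype n] [DecidableEq n]
    (ρ : Matrix n n ℂ) : ℝ := (-(ρ * matLog ρ).trace).re

/-- Relative entropy `S(ρ‖σ) = Tr[ρ log ρ] - Tr[ρ log σ]`. -/
noncomputable def relEnt {n : Type*} [Fintype n] [DecidableEq n]
    (ρ σ : Matrix n n ℂ) : ℝ :=
  ((ρ * matLog ρ).trace - (ρ * matLog σ).trace).re

/-- A density matrix: positive semidefinite with unit trace. -/
def IsDensity {n : Type*} [Fintype n] (ρ : Matrix n n ℂ) : Prop :=
  ρ.PosSemidef ∧ ρ.trace = 1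

/-- Partial trace over the second tensor factor. -/
noncomputable def ptrB {A B : Type*} [Fintype A] [Fintype B]
    (ρ : Matrix (A × B) (A × B) ℂ) : Matrix A A ℂ :=
  Matrix.of fun i j => ∑ b : B, ρ (i, b) (j, b)

/-- Partial trace over the first tensor factor. -/
noncomputable def ptrA {A B : Type*} [Fintype A] [Fintype B]
    (ρ : Matrix (A × B) (A × B) ℂ) : Matrix B B ℂ :=
  Matrix.of fun i j => ∑ a : A, ρ (a, i) (a, j)

section FirstLawAux
variable {n : Type*} [Fintype n] [DecidableEq n]


lemma cfcH_eq (f : ℝ → ℝ) {A : Matrix n n ℂ} (hA : A.IsHermitian) :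
    cfcH f A = (hA.eigenvectorUnitary : Matrix n n ℂ) *
      Matrix.diagonal (fun i => (f (hA.eigenvalues i) : ℂ)) *
      star (hA.eigenvectorUnitary : Matrix n n ℂ) := dif_pos hA

lemma cfcH_id {A : Matrix n n ℂ} (hA : A.IsHermitian) : cfcH id A = A := by
  rw [cfcH_eq id hA]
  conv_rhs => rw [hA.spectral_theorem]
  norm_cast

lemma key (f g : ℝ → ℝ) {A B : Matrix n n ℂ} (hA : A.IsHermitian) (hB : B.IsHermitian) :
    (cfcH f A * cfcH g B).trace
      = ((∑ i, ∑ j, f (hA.eigenvalues i) * g (hB.eigenvalues j) *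
          Complex.normSq ((star (hA.eigenvectorUnitary : Matrix n n ℂ) *
            (hB.eigenvectorUnitary : Matrix n n ℂ)) i j) : ℝ) : ℂ) := by
  set U := (hA.eigenvectorUnitary : Matrix n n ℂ) with hU
  set V := (hB.eigenvectorUnitary : Matrix n n ℂ) with hV
  set W := star U * V with hW
  have hWs : star W = star V * U := by simp [hW]
  set D := Matrix.diagonal (fun i => (f (hA.eigenvalues i) : ℂ)) with hD
  set E := Matrix.diagonal (fun i => (g (hB.eigenvalues i) : ℂ)) with hE
  rw [cfcH_eq f hA, cfcH_eq g hB, ← hU, ← hV, ← hD, ← hE]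
  have h1 : U * D * star U * (V * E * star V) = U * (D * (star U * (V * (E * star V)))) := by
    simp only [Matrix.mul_assoc]
  rw [h1, Matrix.trace_mul_comm]
  have h2 : D * (star U * (V * (E * star V))) * U = D * W * (E * star W) := by
    rw [hW, hWs]; simp only [Matrix.mul_assoc]
  rw [h2, Matrix.trace]
  push_cast
  refine Finset.sum_congr rfl fun i _ => ?_
  rw [Matrix.diag_apply, Matrix.mul_apply]
  refine Finset.sum_congr rfl fun j _ => ?_
  rw [Matrix.diagonal_mul, Matrix.diagonal_mul, Matrix.star_apply,
    ← Complex.mul_conj]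
  simp only [RingHom.coe_coe, Complex.star_def]
  ring

lemma key_self (f g : ℝ → ℝ) {A : Matrix n n ℂ} (hA : A.IsHermitian) :
    (cfcH f A * cfcH g A).trace
      = ((∑ i, f (hA.eigenvalues i) * g (hA.eigenvalues i) : ℝ) : ℂ) := by
  have hUU : star (hA.eigenvectorUnitary : Matrix n n ℂ) *
      (hA.eigenvectorUnitary : Matrix n n ℂ) = 1 :=
    Matrix.UnitaryGroup.star_mul_self _
  rw [key f g hA hA, hUU]
  norm_cast
  refine Finset.sum_congr rfl fun i _ => ?_
  rw [Finset.sum_eq_single i]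
  · simp [Matrix.one_apply]
  · intro j _ hj
    simp [Matrix.one_apply, Ne.symm hj]
  · simp

lemma trace_eq_sum_eig {A : Matrix n n ℂ} (hA : A.IsHermitian) :
    A.trace = ((∑ i, hA.eigenvalues i : ℝ) : ℂ) := by
  conv_lhs => rw [hA.spectral_theorem]
  rw [Unitary.conjStarAlgAut_apply, Matrix.mul_assoc, Matrix.trace_mul_comm, Matrix.mul_assoc,
    Matrix.UnitaryGroup.star_mul_self, Matrix.mul_one, Matrix.trace_diagonal]
  push_cast
  rfl

lemma row_sum_one {W : Matrix n n ℂ} (h : W * star W = 1) (i : n) :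
    ∑ j, Complex.normSq (W i j) = 1 := by
  have h3 : (W * star W) i i = 1 := by rw [h]; simp [Matrix.one_apply]
  rw [Matrix.mul_apply] at h3
  simp only [Matrix.star_apply, Complex.star_def, Complex.mul_conj] at h3
  exact_mod_cast h3

lemma col_sum_one {W : Matrix n n ℂ} (h : star W * W = 1) (j : n) :
    ∑ i, Complex.normSq (W i j) = 1 := by
  have h3 : (star W * W) j j = 1 := by rw [h]; simp [Matrix.one_apply]
  rw [Matrix.mul_apply] at h3
  simp only [Matrix.star_apply, Complex.star_def] at h3
  have : ∀ i, (starRingEnd ℂ) (W i j) * W i j = (Complex.normSq (W i j) : ℂ) := by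
    intro i; rw [mul_comm, Complex.mul_conj]
  rw [Finset.sum_congr rfl fun i _ => this i] at h3
  exact_mod_cast h3

lemma trace_sq_eq {H : Matrix n n ℂ} (hH : H.IsHermitian) :
    (H * H).trace = ((∑ i, ∑ j, Complex.normSq (H i j) : ℝ) : ℂ) := by
  rw [Matrix.trace]
  push_cast
  refine Finset.sum_congr rfl fun i _ => ?_
  rw [Matrix.diag_apply, Matrix.mul_apply]
  refine Finset.sum_congr rfl fun j _ => ?_
  rw [← hH.apply j i, Complex.star_def, Complex.mul_conj]

lemma phi_nonneg {p q : ℝ} (hp : 0 ≤ p) (hq : 0 < q) :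
    0 ≤ p * Real.log p - p * Real.log q - p + q := by
  rcases eq_or_lt_of_le hp with h | h
  · simp [← h]; positivity
  · have h1 : Real.log (q / p) ≤ q / p - 1 := Real.log_le_sub_one_of_pos (by positivity)
    rw [Real.log_div hq.ne' h.ne'] at h1
    have h2 : p * (Real.log q - Real.log p) ≤ p * (q / p - 1) :=
      mul_le_mul_of_nonneg_left h1 hp
    have h3 : p * (q / p - 1) = q - p := by field_simp
    nlinarith

lemma phi_le {p q : ℝ} (hp : 0 ≤ p) (hq : 0 < q) :
    p * Real.log p - p * Real.log q - p + q ≤ (p - q)^2 / q := by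
  rcases eq_or_lt_of_le hp with h | h
  · rw [← h]; simp [Real.log_zero]
    rw [sq, mul_div_assoc, div_self hq.ne', mul_one]
  · have h1 : Real.log (p / q) ≤ p / q - 1 := Real.log_le_sub_one_of_pos (by positivity)
    rw [Real.log_div h.ne' hq.ne'] at h1
    have h2 : p * (Real.log p - Real.log q) ≤ p * (p / q - 1) :=
      mul_le_mul_of_nonneg_left h1 hp
    have h3 : p * (p / q - 1) - p + q = (p - q)^2 / q := by field_simp; ring
    nlinarith

end FirstLawAux

lemma relEnt_bounds {n : Type*} [Fintype n] [DecidableEq n]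
    {ρ σ : Matrix n n ℂ} (hρ : ρ.PosSemidef) (hρt : ρ.trace = 1)
    (hσ : σ.PosDef) (hσt : σ.trace = 1) {c : ℝ} (hc : 0 < c)
    (hcq : ∀ j, c ≤ hσ.1.eigenvalues j) :
    0 ≤ relEnt ρ σ ∧
      relEnt ρ σ ≤ (∑ i, ∑ j, Complex.normSq ((ρ - σ) i j)) / c := by
  have hA := hρ.1
  have hB := hσ.1
  set p : n → ℝ := hA.eigenvalues with hp
  set q : n → ℝ := hB.eigenvalues with hq
  set U := (hA.eigenvectorUnitary : Matrix n n ℂ) with hU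
  set V := (hB.eigenvectorUnitary : Matrix n n ℂ) with hV
  set W := star U * V with hW
  set cij : n → n → ℝ := fun i j => Complex.normSq (W i j) with hcij
  -- unitarity of W
  have hVV : V * star V = 1 := hB.eigenvectorUnitary.2.2
  have hUU : U * star U = 1 := hA.eigenvectorUnitary.2.2
  have hWW : W * star W = 1 := by
    rw [hW, Matrix.star_mul, star_star, Matrix.mul_assoc, ← Matrix.mul_assoc V,
      hVV, Matrix.one_mul, Matrix.UnitaryGroup.star_mul_self]
  have hWW' : star W * W = 1 := by
    rw [hW, Matrix.star_mul, star_star, Matrix.mul_assoc, ← Matrix.mul_assoc U,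
      hUU, Matrix.one_mul, Matrix.UnitaryGroup.star_mul_self]
  have hrow : ∀ i, ∑ j, cij i j = 1 := fun i => row_sum_one hWW i
  have hcol : ∀ j, ∑ i, cij i j = 1 := fun j => col_sum_one hWW' j
  -- eigenvalue facts
  have hpnn : ∀ i, 0 ≤ p i := fun i => hρ.eigenvalues_nonneg i
  have hqpos : ∀ j, 0 < q j := fun j => hσ.eigenvalues_pos j
  have hps : ∑ i, p i = 1 := by
    have := trace_eq_sum_eig hA
    rw [hρt] at this
    exact_mod_cast this.symm
  have hqs : ∑ j, q j = 1 := by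
    have := trace_eq_sum_eig hB
    rw [hσt] at this
    exact_mod_cast this.symm
  -- trace formulas
  have e1 : (ρ * matLog ρ).trace = ((∑ i, p i * Real.log (p i) : ℝ) : ℂ) := by
    rw [show ρ * matLog ρ = cfcH id ρ * cfcH Real.log ρ by rw [cfcH_id hA]; rfl]
    exact key_self id Real.log hA
  have e2 : (ρ * matLog σ).trace
      = ((∑ i, ∑ j, p i * Real.log (q j) * cij i j : ℝ) : ℂ) := by
    rw [show ρ * matLog σ = cfcH id ρ * cfcH Real.log σ by rw [cfcH_id hA]; rfl]
    exact key id Real.log hA hB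
  have hre : relEnt ρ σ
      = ∑ i, p i * Real.log (p i) - ∑ i, ∑ j, p i * Real.log (q j) * cij i j := by
    rw [relEnt, e1, e2, ← Complex.ofReal_sub, Complex.ofReal_re]
  -- rewrite as a doubly-indexed sum of φ terms
  have hsum1 : ∑ i, ∑ j, cij i j * (p i * Real.log (p i))
      = ∑ i, p i * Real.log (p i) := by
    refine Finset.sum_congr rfl fun i _ => ?_
    rw [← Finset.sum_mul, hrow i, one_mul]
  have hsum2 : ∑ i, ∑ j, cij i j * p i = 1 := by
    rw [← hps]
    refine Finset.sum_congr rfl fun i _ => ?_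
    rw [← Finset.sum_mul, hrow i, one_mul]
  have hsum3 : ∑ i, ∑ j, cij i j * q j = 1 := by
    rw [← hqs, Finset.sum_comm]
    refine Finset.sum_congr rfl fun j _ => ?_
    rw [← Finset.sum_mul, hcol j, one_mul]
  have hsum4 : ∑ i, ∑ j, cij i j * (p i * Real.log (q j))
      = ∑ i, ∑ j, p i * Real.log (q j) * cij i j := by
    refine Finset.sum_congr rfl fun i _ => Finset.sum_congr rfl fun j _ => by ring
  have hmain : relEnt ρ σ = ∑ i, ∑ j, cij i j *
      (p i * Real.log (p i) - p i * Real.log (q j) - p i + q j) := by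
    have hex : ∑ i, ∑ j, cij i j *
        (p i * Real.log (p i) - p i * Real.log (q j) - p i + q j)
        = (∑ i, ∑ j, cij i j * (p i * Real.log (p i)))
          - (∑ i, ∑ j, cij i j * (p i * Real.log (q j)))
          - (∑ i, ∑ j, cij i j * p i) + ∑ i, ∑ j, cij i j * q j := by
      simp only [mul_sub, mul_add, Finset.sum_sub_distrib, Finset.sum_add_distrib]
    rw [hex, hsum1, hsum2, hsum3, hsum4, hre]
    ring
  constructor
  · rw [hmain]
    refine Finset.sum_nonneg fun i _ => Finset.sum_nonneg fun j _ => ?_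
    exact mul_nonneg (Complex.normSq_nonneg _) (phi_nonneg (hpnn i) (hqpos j))
  · -- quadratic upper bound
    have hpq : (ρ * σ).trace = ((∑ i, ∑ j, p i * q j * cij i j : ℝ) : ℂ) := by
      rw [show ρ * σ = cfcH id ρ * cfcH id σ by rw [cfcH_id hA, cfcH_id hB]]
      exact key id id hA hB
    have hρ2 : (ρ * ρ).trace = ((∑ i, p i * p i : ℝ) : ℂ) := by
      rw [show ρ * ρ = cfcH id ρ * cfcH id ρ by rw [cfcH_id hA]]
      exact key_self id id hA
    have hσ2 : (σ * σ).trace = ((∑ j, q j * q j : ℝ) : ℂ) := by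
      rw [show σ * σ = cfcH id σ * cfcH id σ by rw [cfcH_id hB]]
      exact key_self id id hB
    have hDtr : ((ρ - σ) * (ρ - σ)).trace
        = (ρ * ρ).trace - (ρ * σ).trace - (ρ * σ).trace + (σ * σ).trace := by
      rw [Matrix.sub_mul, Matrix.mul_sub, Matrix.mul_sub, Matrix.trace_sub,
        Matrix.trace_sub, Matrix.trace_sub, Matrix.trace_mul_comm σ ρ]
      ring
    have hDsq : (∑ i, ∑ j, Complex.normSq ((ρ - σ) i j))
        = (∑ i, p i * p i) - 2 * (∑ i, ∑ j, p i * q j * cij i j)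
          + ∑ j, q j * q j := by
      have := trace_sq_eq (hA.sub hB)
      rw [hDtr, hρ2, hσ2, hpq] at this
      have h2 : ((∑ i, ∑ j, Complex.normSq ((ρ - σ) i j) : ℝ) : ℂ)
          = (((∑ i, p i * p i) - 2 * (∑ i, ∑ j, p i * q j * cij i j)
            + ∑ j, q j * q j : ℝ) : ℂ) := by
        rw [← this]; push_cast; ring
      exact_mod_cast h2
    have hcexp : ∑ i, ∑ j, cij i j * (p i - q j)^2
        = ∑ i, ∑ j, Complex.normSq ((ρ - σ) i j) := by
      have hexp2 : ∑ i, ∑ j, cij i j * (p i - q j)^2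
          = (∑ i, ∑ j, cij i j * (p i * p i))
            - 2 * (∑ i, ∑ j, cij i j * (p i * q j))
            + ∑ i, ∑ j, cij i j * (q j * q j) := by
        simp only [← Finset.sum_sub_distrib, ← Finset.sum_add_distrib,
          Finset.mul_sum]
        refine Finset.sum_congr rfl fun i _ => Finset.sum_congr rfl fun j _ => by ring
      have hA2 : ∑ i, ∑ j, cij i j * (p i * p i) = ∑ i, p i * p i := by
        refine Finset.sum_congr rfl fun i _ => ?_
        rw [← Finset.sum_mul, hrow i, one_mul]
      have hB2 : ∑ i, ∑ j, cij i j * (q j * q j) = ∑ j, q j * q j := by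
        rw [Finset.sum_comm]
        refine Finset.sum_congr rfl fun j _ => ?_
        rw [← Finset.sum_mul, hcol j, one_mul]
      have hAB : ∑ i, ∑ j, cij i j * (p i * q j)
          = ∑ i, ∑ j, p i * q j * cij i j := by
        refine Finset.sum_congr rfl fun i _ => Finset.sum_congr rfl fun j _ => by ring
      rw [hexp2, hA2, hB2, hAB, hDsq]
    rw [hmain, ← hcexp]
    rw [Finset.sum_div]
    refine Finset.sum_le_sum fun i _ => ?_
    rw [Finset.sum_div]
    refine Finset.sum_le_sum fun j _ => ?_
    have h1 : p i * Real.log (p i) - p i * Real.log (q j) - p i + q j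
        ≤ (p i - q j)^2 / q j := phi_le (hpnn i) (hqpos j)
    have h2 : (p i - q j)^2 / q j ≤ (p i - q j)^2 / c :=
      div_le_div_of_nonneg_left (sq_nonneg _) hc (hcq j) |>.trans_eq rfl
    calc cij i j * (p i * Real.log (p i) - p i * Real.log (q j) - p i + q j)
        ≤ cij i j * ((p i - q j)^2 / c) :=
          mul_le_mul_of_nonneg_left (h1.trans h2) (Complex.normSq_nonneg _)
      _ = cij i j * (p i - q j)^2 / c := by ring

/-- First law of entanglement: the first-order variation of relative entropy about
the reference state vanishes; equivalently δS = δ⟨H_σ⟩ with H_σ = -log σ. -/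
theorem first_law_of_entanglement
    {n : Type*} [Fintype n] [DecidableEq n]
    (σ : Matrix n n ℂ) (hσ : IsDensity σ) (hfull : σ.PosDef)
    (ρ : ℝ → Matrix n n ℂ) (hρ : ∀ ε, IsDensity (ρ ε)) (h0 : ρ 0 = σ)
    (hsmooth : ∀ i j, ContDiff ℝ (⊤ : ℕ∞) fun ε => ρ ε i j) :
    deriv (fun ε => relEnt (ρ ε) σ) 0 = 0 ∧
    deriv (fun ε => vN (ρ ε)) 0
      = deriv (fun ε => (-((ρ ε) * matLog σ).trace).re) 0 := by
  cases isEmpty_or_nonempty n with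
  | inl h =>
    have hall : ∀ M N : Matrix n n ℂ, (M * N).trace = 0 := fun M N => by
      simp [Matrix.trace]
    have h1 : (fun ε => relEnt (ρ ε) σ) = fun _ => (0:ℝ) :=
      funext fun ε => by simp [relEnt, hall]
    have h2 : (fun ε => vN (ρ ε)) = fun _ => (0:ℝ) :=
      funext fun ε => by simp [vN, hall]
    have h3 : (fun ε => (-((ρ ε) * matLog σ).trace).re) = fun _ => (0:ℝ) :=
      funext fun ε => by simp [hall]
    rw [h1, h2, h3, deriv_const]
    exact ⟨rfl, rfl⟩
  | inr h =>
    -- minimum eigenvalue of σ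
    set c : ℝ := Finset.univ.inf' Finset.univ_nonempty hfull.1.eigenvalues with hcdef
    have hc : 0 < c := by
      rw [hcdef, Finset.lt_inf'_iff]
      exact fun j _ => hfull.eigenvalues_pos j
    have hcq : ∀ j, c ≤ hfull.1.eigenvalues j := fun j =>
      Finset.inf'_le _ (Finset.mem_univ j)
    have hbounds := fun ε => relEnt_bounds (hρ ε).1 (hρ ε).2 hfull hσ.2 hc hcq
    -- entrywise Lipschitz bounds near 0
    have hlip : ∀ i j, ∃ K : NNReal, ∀ᶠ ε in nhds (0:ℝ),
        ‖ρ ε i j - σ i j‖ ≤ K * |ε| := by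
      intro i j
      obtain ⟨K, t, ht, hK⟩ :=
        (((hsmooth i j).contDiffAt (x := 0)).of_le (by simp)).exists_lipschitzOnWith
      refine ⟨K, ?_⟩
      filter_upwards [ht] with ε hε
      have hd := hK.dist_le_mul ε hε 0 (mem_of_mem_nhds ht)
      rw [dist_eq_norm, dist_eq_norm, h0] at hd
      simpa using hd
    choose K hKlip using hlip
    set C : ℝ := ∑ i, ∑ j, ((K i j : ℝ))^2 with hCdef
    have hev : ∀ᶠ ε in nhds (0:ℝ),
        (∑ i, ∑ j, Complex.normSq ((ρ ε - σ) i j)) ≤ C * ε^2 := by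
      have hall := Filter.eventually_all.2 fun i =>
        Filter.eventually_all.2 fun j => hKlip i j
      filter_upwards [hall] with ε hε
      have hterm : ∀ i j, Complex.normSq ((ρ ε - σ) i j) ≤ (K i j : ℝ)^2 * ε^2 := by
        intro i j
        have h1 := hε i j
        have h2 : Complex.normSq ((ρ ε - σ) i j) = ‖ρ ε i j - σ i j‖^2 := by
          rw [Matrix.sub_apply, Complex.normSq_eq_norm_sq]
        rw [h2]
        calc ‖ρ ε i j - σ i j‖^2 ≤ ((K i j : ℝ) * |ε|)^2 := by
              apply sq_le_sq'
              · nlinarith [norm_nonneg (ρ ε i j - σ i j), abs_nonneg ε,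
                  (K i j).coe_nonneg]
              · exact h1
          _ = (K i j : ℝ)^2 * ε^2 := by rw [mul_pow, sq_abs]
      calc (∑ i, ∑ j, Complex.normSq ((ρ ε - σ) i j))
          ≤ ∑ i, ∑ j, (K i j : ℝ)^2 * ε^2 :=
            Finset.sum_le_sum fun i _ => Finset.sum_le_sum fun j _ => hterm i j
        _ = C * ε^2 := by
            rw [hCdef, Finset.sum_mul]
            exact Finset.sum_congr rfl fun i _ => by rw [Finset.sum_mul]
    -- relEnt is o(ε)
    have hf0 : relEnt (ρ 0) σ = 0 := by rw [h0, relEnt, sub_self, Complex.zero_re]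
    have hO : (fun ε => relEnt (ρ ε) σ) =O[nhds 0] fun ε => ε^2 := by
      rw [Asymptotics.isBigO_iff]
      refine ⟨C / c, ?_⟩
      filter_upwards [hev] with ε hε
      have h1 := (hbounds ε).1
      have h2 := (hbounds ε).2
      have h3 : (∑ i, ∑ j, Complex.normSq ((ρ ε - σ) i j)) / c ≤ C * ε^2 / c :=
        (div_le_div_iff_of_pos_right hc).2 hε
      rw [Real.norm_eq_abs, abs_of_nonneg h1, Real.norm_eq_abs, abs_of_nonneg (sq_nonneg ε)]
      calc relEnt (ρ ε) σ ≤ C * ε^2 / c := h2.trans h3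
        _ = C / c * ε^2 := by ring
    have hlo : (fun ε : ℝ => ε^2) =o[nhds 0] fun ε => ε := by
      have h1 : (fun ε : ℝ => ε) =o[nhds (0:ℝ)] fun _ => (1:ℝ) :=
        (Asymptotics.isLittleO_one_iff ℝ).2 (by exact Filter.tendsto_id)
      have h2 := h1.mul_isBigO (Asymptotics.isBigO_refl (fun ε : ℝ => ε) (nhds 0))
      simpa [pow_two] using h2
    have hrel : HasDerivAt (fun ε => relEnt (ρ ε) σ) 0 0 := by
      rw [hasDerivAt_iff_isLittleO]
      simpa [hf0] using hO.trans_isLittleO hlo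
    -- differentiability of the modular-energy term
    have hgd : DifferentiableAt ℝ (fun ε => (-((ρ ε) * matLog σ).trace).re) 0 := by
      have hrw : (fun ε => (-((ρ ε) * matLog σ).trace).re)
          = fun ε => -∑ i, ∑ k, (ρ ε i k * matLog σ k i).re := by
        funext ε
        simp [Matrix.trace, Matrix.mul_apply, Complex.neg_re, Complex.re_sum]
      rw [hrw]
      apply DifferentiableAt.neg
      apply DifferentiableAt.fun_sum
      intro i _
      apply DifferentiableAt.fun_sum
      intro k _
      have h1 : DifferentiableAt ℝ (fun ε => ρ ε i k * matLog σ k i) 0 :=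
        (((hsmooth i k).differentiable (by simp)) 0).mul_const _
      exact (Complex.reCLM.differentiableAt).comp 0 h1
    constructor
    · exact hrel.deriv
    · have hvg : (fun ε => vN (ρ ε))
          = fun ε => (-((ρ ε) * matLog σ).trace).re - relEnt (ρ ε) σ := by
        funext ε
        rw [vN, relEnt]
        simp [Complex.sub_re, Complex.neg_re]
        ring
      rw [hvg]
      have hd := (hgd.hasDerivAt.sub hrel).deriv
      rw [sub_zero] at hd
      exact hd
end

section
/- Dong–Harlow–Wall commutant step: let C be a subspace of H = H_A ⊗ H_Ā with a factorization C ≅ H_a ⊗ H_ā, and O a Hermitian operator acting only on the factor H_a. Suppose that for all pure states |Ψ⟩, |Φ⟩ in C, equality of the reduced states on ā implies equality of the reduced states on Ā (i.e., Tr_a|Ψ⟩⟨Ψ| = Tr_a|Φ⟩⟨Φ| ⇒ Tr_A|Ψ⟩⟨Ψ| = Tr_A|Φ⟩⟨Φ|). Then for every operator X_Ā supported only on H_Ā and every |Φ⟩ ∈ C, ⟨Φ|[O, X_Ā]|Φ⟩ = 0. -/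
open Matrix Kronecker
open scoped ComplexOrder

/-!
Conjugating a code state by a unitary `g ⊗ 1` acting on `a` leaves its reduced state on `ā`
unchanged, so by hypothesis it leaves the reduced state on `Ā` unchanged, and hence also the
expectation value of `1 ⊗ x`. Taking `g = exp (i t o)` and differentiating the constant function
`t ↦ ⟨(g ⊗ 1) φ, V† (1 ⊗ x) V (g ⊗ 1) φ⟩` at `t = 0` gives `⟨φ, [V† (1 ⊗ x) V, o ⊗ 1] φ⟩ = 0`,
and `V† V = 1` turns this into the claim.
-/

section PartialTrace

variable {m n : Type*} [Fintype m] [Fintype n]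

theorem trace_one_kronecker_mul [DecidableEq m] (x : Matrix n n ℂ)
    (ρ : Matrix (m × n) (m × n) ℂ) :
    trace (((1 : Matrix m m ℂ) ⊗ₖ x) * ρ) = trace (x * ptrA ρ) := by
  simp only [trace, diag_apply, mul_apply, kroneckerMap_apply, one_apply, ite_mul, one_mul,
    zero_mul, Fintype.sum_prod_type, Finset.sum_ite_irrel, Finset.sum_const_zero, Finset.sum_ite_eq,
    Finset.mem_univ, ↓reduceIte, ptrA, of_apply, Finset.mul_sum]
  rw [Finset.sum_comm]
  exact Finset.sum_congr rfl fun _ _ => Finset.sum_comm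

theorem ptrA_kronecker_one_mul_mul_conjTranspose [DecidableEq m] [DecidableEq n]
    {g : Matrix m m ℂ} (hg : g ∈ unitary (Matrix m m ℂ)) (ρ : Matrix (m × n) (m × n) ℂ) :
    ptrA ((g ⊗ₖ (1 : Matrix n n ℂ)) * ρ * (g ⊗ₖ (1 : Matrix n n ℂ))ᴴ) = ptrA ρ := by
  refine ext_iff_trace_mul_left.2 fun x => ?_
  have hconj : (g ⊗ₖ (1 : Matrix n n ℂ))ᴴ * ((1 : Matrix m m ℂ) ⊗ₖ x) * (g ⊗ₖ 1)
      = (1 : Matrix m m ℂ) ⊗ₖ x := by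
    rw [conjTranspose_kronecker, conjTranspose_one, ← mul_kronecker_mul, ← mul_kronecker_mul,
      mul_one, ← star_eq_conjTranspose, Unitary.star_mul_self_of_mem hg, one_mul, mul_one]
  rw [← trace_one_kronecker_mul, ← trace_one_kronecker_mul, ← mul_assoc, ← mul_assoc,
    trace_mul_comm, ← mul_assoc, ← mul_assoc, hconj]

end PartialTrace

section PureState

variable {m n : Type*} [Fintype n]

theorem vecMulVec_mulVec_star (M : Matrix m n ℂ) (v : n → ℂ) :
    vecMulVec (M *ᵥ v) (star (M *ᵥ v)) = M * vecMulVec v (star v) * Mᴴ := by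
  rw [mul_vecMulVec, vecMulVec_mul, star_mulVec]

theorem star_dotProduct_mulVec_eq_trace (M : Matrix n n ℂ) (v : n → ℂ) :
    star v ⬝ᵥ M *ᵥ v = trace (M * vecMulVec v (star v)) := by
  rw [mul_vecMulVec, trace_vecMulVec, dotProduct_comm]

theorem star_mulVec_dotProduct_mulVec_mulVec [Fintype m] (M : Matrix m n ℂ) (N : Matrix m m ℂ)
    (v : n → ℂ) : star (M *ᵥ v) ⬝ᵥ N *ᵥ (M *ᵥ v) = star v ⬝ᵥ (Mᴴ * N * M) *ᵥ v := by
  rw [star_mulVec, ← dotProduct_mulVec, mulVec_mulVec, mulVec_mulVec]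

theorem star_dotProduct_one_kronecker_mulVec [Fintype m] [DecidableEq m] (x : Matrix n n ℂ)
    (v : m × n → ℂ) :
    star v ⬝ᵥ ((1 : Matrix m m ℂ) ⊗ₖ x) *ᵥ v = trace (x * ptrA (vecMulVec v (star v))) := by
  rw [star_dotProduct_mulVec_eq_trace, trace_one_kronecker_mul]

theorem ptrA_vecMulVec_kronecker_one_mulVec [Fintype m] [DecidableEq m] [DecidableEq n]
    {g : Matrix m m ℂ} (hg : g ∈ unitary (Matrix m m ℂ)) (v : m × n → ℂ) :
    ptrA (vecMulVec ((g ⊗ₖ (1 : Matrix n n ℂ)) *ᵥ v) (star ((g ⊗ₖ (1 : Matrix n n ℂ)) *ᵥ v)))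
      = ptrA (vecMulVec v (star v)) := by
  rw [vecMulVec_mulVec_star, ptrA_kronecker_one_mul_mul_conjTranspose hg]

end PureState

section Calculus

variable {n : Type*} [Fintype n]

theorem hasDerivAt_star_dotProduct_mulVec (N : Matrix n n ℂ) {v : ℝ → n → ℂ} {w : n → ℂ}
    {t : ℝ} (hv : HasDerivAt v w t) :
    HasDerivAt (fun s => star (v s) ⬝ᵥ N *ᵥ v s)
      (star (v t) ⬝ᵥ N *ᵥ w + star w ⬝ᵥ N *ᵥ v t) t := by
  let B : (n → ℂ) →ₗ[ℝ] (n → ℂ) →ₗ[ℝ] ℂ :=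
    LinearMap.mk₂ ℝ (fun x y => star x ⬝ᵥ N *ᵥ y)
      (fun x x' y => by rw [star_add, add_dotProduct])
      (fun r x y => by rw [star_smul, star_trivial, smul_dotProduct])
      (fun x y y' => by rw [mulVec_add, dotProduct_add])
      (fun r x y => by rw [mulVec_smul, dotProduct_smul])
  exact B.toContinuousBilinearMap.hasDerivAt_of_bilinear (fun _ => hv) (fun _ => hv)

theorem star_dotProduct_mulVec_deriv_eq_zero (N : Matrix n n ℂ) {v : ℝ → n → ℂ} {w : n → ℂ}
    {t : ℝ} (hv : HasDerivAt v w t)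
    (hconst : ∀ s, star (v s) ⬝ᵥ N *ᵥ v s = star (v t) ⬝ᵥ N *ᵥ v t) :
    star (v t) ⬝ᵥ N *ᵥ w + star w ⬝ᵥ N *ᵥ v t = 0 := by
  refine (hasDerivAt_star_dotProduct_mulVec N hv).unique ?_
  rw [funext hconst]
  exact hasDerivAt_const t _

theorem star_dotProduct_commutator_mulVec_eq_zero {h N : Matrix n n ℂ}
    (hh : h.IsHermitian) {φ : n → ℂ} {v : ℝ → n → ℂ}
    (hv : HasDerivAt v ((Complex.I • h) *ᵥ φ) 0) (hv0 : v 0 = φ)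
    (hconst : ∀ t, star (v t) ⬝ᵥ N *ᵥ v t = star φ ⬝ᵥ N *ᵥ φ) :
    star φ ⬝ᵥ (N * h - h * N) *ᵥ φ = 0 := by
  have hderiv := star_dotProduct_mulVec_deriv_eq_zero N hv (by rwa [hv0])
  have hexpand : star φ ⬝ᵥ N *ᵥ ((Complex.I • h) *ᵥ φ) + star ((Complex.I • h) *ᵥ φ) ⬝ᵥ N *ᵥ φ
      = Complex.I * star φ ⬝ᵥ (N * h - h * N) *ᵥ φ := by
    rw [smul_mulVec, star_smul, smul_dotProduct, mulVec_smul, dotProduct_smul, star_mulVec,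
      ← dotProduct_mulVec, hh.eq, mulVec_mulVec, mulVec_mulVec, sub_mulVec, dotProduct_sub,
      Complex.star_def, Complex.conj_I, smul_eq_mul, smul_eq_mul]
    ring
  rw [hv0, hexpand] at hderiv
  exact (mul_eq_zero.1 hderiv).resolve_left Complex.I_ne_zero

end Calculus

section Flow

open NormedSpace

variable {m n : Type*} [Fintype m] [DecidableEq m] [Fintype n] [DecidableEq n]

theorem Matrix.exp_mem_unitary_of_mem_skewAdjoint {𝔸 : Type*} [NormedRing 𝔸]
    [NormedAlgebra ℚ 𝔸] [CompleteSpace 𝔸] [StarRing 𝔸] [ContinuousStar 𝔸]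
    {X : Matrix m m 𝔸} (hX : X ∈ skewAdjoint (Matrix m m 𝔸)) :
    exp X ∈ unitary (Matrix m m 𝔸) := by
  rw [Unitary.mem_iff, star_exp, skewAdjoint.mem_iff.mp hX,
    ← exp_add_of_commute _ _ (Commute.refl X).neg_left,
    ← exp_add_of_commute _ _ (Commute.refl X).neg_right, neg_add_cancel, add_neg_cancel,
    exp_zero, and_self]

theorem exp_real_smul_I_smul_mem_unitary {o : Matrix m m ℂ} (ho : o.IsHermitian) (t : ℝ) :
    exp (t • (Complex.I • o)) ∈ unitary (Matrix m m ℂ) :=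
  Matrix.exp_mem_unitary_of_mem_skewAdjoint <| skewAdjoint.smul_mem t <|
    ho.isSelfAdjoint.smul_mem_skewAdjoint (skewAdjoint.mem_iff.2 Complex.conj_I)

theorem hasDerivAt_exp_smul_kronecker_one_mulVec (K : Matrix m m ℂ) (v : m × n → ℂ) :
    HasDerivAt (fun t : ℝ => (exp (t • K) ⊗ₖ (1 : Matrix n n ℂ)) *ᵥ v)
      ((K ⊗ₖ (1 : Matrix n n ℂ)) *ᵥ v) 0 := by
  let : NormedRing (Matrix m m ℂ) := Matrix.linftyOpNormedRing
  let : NormedAlgebra ℝ (Matrix m m ℂ) := Matrix.linftyOpNormedAlgebra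
  let L : Matrix m m ℂ →ₗ[ℝ] (m × n → ℂ) :=
    { toFun := fun M => (M ⊗ₖ (1 : Matrix n n ℂ)) *ᵥ v
      map_add' := fun M M' => by rw [add_kronecker, add_mulVec]
      map_smul' := fun r M => by rw [smul_kronecker, smul_mulVec, RingHom.id_apply] }
  have hexp := hasDerivAt_exp_smul_const (𝕂 := ℝ) K 0
  rw [zero_smul, exp_zero, one_mul] at hexp
  exact (LinearMap.toContinuousLinearMap L).hasFDerivAt.comp_hasDerivAt 0 hexp

end Flow

theorem dhw_commutant_step_general
    {A A' a a' : Type*} [Fintype A] [DecidableEq A] [Fintype A']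
    [Fintype a] [DecidableEq a] [Fintype a'] [DecidableEq a']
    (V : Matrix (A × A') (a × a') ℂ) (hV : Vᴴ * V = 1)
    (o : Matrix a a ℂ) (ho : o.IsHermitian)
    (hyp : ∀ ψ φ : a × a' → ℂ, star ψ ⬝ᵥ ψ = 1 → star φ ⬝ᵥ φ = 1 →
      ptrA (vecMulVec ψ (star ψ)) = ptrA (vecMulVec φ (star φ)) →
      ptrA (vecMulVec (V.mulVec ψ) (star (V.mulVec ψ)))
        = ptrA (vecMulVec (V.mulVec φ) (star (V.mulVec φ)))) :
    ∀ (x : Matrix A' A' ℂ) (φ : a × a' → ℂ), star φ ⬝ᵥ φ = 1 →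
      star (V.mulVec φ) ⬝ᵥ
        ((V * (o ⊗ₖ (1 : Matrix a' a' ℂ)) * Vᴴ * ((1 : Matrix A A ℂ) ⊗ₖ x)
          - ((1 : Matrix A A ℂ) ⊗ₖ x) * (V * (o ⊗ₖ (1 : Matrix a' a' ℂ)) * Vᴴ)).mulVec
          (V.mulVec φ)) = 0 := by
  intro x φ hφ
  set O := o ⊗ₖ (1 : Matrix a' a' ℂ)
  set X := (1 : Matrix A A ℂ) ⊗ₖ x
  set N := Vᴴ * X * V
  have hinvariant (g : Matrix a a ℂ) (hg : g ∈ unitary (Matrix a a ℂ)) :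
      star ((g ⊗ₖ (1 : Matrix a' a' ℂ)) *ᵥ φ) ⬝ᵥ N *ᵥ ((g ⊗ₖ 1) *ᵥ φ) = star φ ⬝ᵥ N *ᵥ φ := by
    set ψ := (g ⊗ₖ (1 : Matrix a' a' ℂ)) *ᵥ φ
    have hψ : star ψ ⬝ᵥ ψ = 1 := by
      have hG := kronecker_mem_unitary hg (one_mem (unitary (Matrix a' a' ℂ)))
      simpa only [one_mulVec, mul_one, ← star_eq_conjTranspose, Unitary.star_mul_self_of_mem hG,
        hφ] using star_mulVec_dotProduct_mulVec_mulVec (g ⊗ₖ (1 : Matrix a' a' ℂ)) 1 φ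
    have hreduced := hyp ψ φ hψ hφ (ptrA_vecMulVec_kronecker_one_mulVec hg φ)
    calc star ψ ⬝ᵥ N *ᵥ ψ = star (V *ᵥ ψ) ⬝ᵥ X *ᵥ (V *ᵥ ψ) :=
          (star_mulVec_dotProduct_mulVec_mulVec V X ψ).symm
      _ = star (V *ᵥ φ) ⬝ᵥ X *ᵥ (V *ᵥ φ) := by
          rw [star_dotProduct_one_kronecker_mulVec, star_dotProduct_one_kronecker_mulVec, hreduced]
      _ = star φ ⬝ᵥ N *ᵥ φ := star_mulVec_dotProduct_mulVec_mulVec V X φ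
  have hO : O.IsHermitian := by
    rw [IsHermitian, conjTranspose_kronecker, ho.eq, conjTranspose_one]
  have hcomm : star φ ⬝ᵥ (N * O - O * N) *ᵥ φ = 0 :=
    star_dotProduct_commutator_mulVec_eq_zero hO
      (by simpa only [smul_kronecker] using
        hasDerivAt_exp_smul_kronecker_one_mulVec (Complex.I • o) φ)
      (by rw [zero_smul, NormedSpace.exp_zero, one_kronecker_one, one_mulVec])
      fun t => hinvariant _ (exp_real_smul_I_smul_mem_unitary ho t)
  have hsandwich : Vᴴ * (V * O * Vᴴ * X - X * (V * O * Vᴴ)) * V = -(N * O - O * N) := by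
    simp only [N, Matrix.mul_sub, Matrix.sub_mul, ← Matrix.mul_assoc, hV, Matrix.one_mul]
    rw [Matrix.mul_assoc _ Vᴴ V, hV, Matrix.mul_one, neg_sub]
  rw [star_mulVec_dotProduct_mulVec_mulVec, hsandwich, neg_mulVec, dotProduct_neg, hcomm, neg_zero]

/-- Dong–Harlow–Wall commutant step: if equality of reduced states on ā implies
equality of reduced states on Ā for all code states, then any Hermitian operator
acting only on the factor a commutes, in expectation on the code subspace, with
every operator supported on Ā. -/
theorem dhw_commutant_step
    {A A' a a' : Type*} [Fintype A] [DecidableEq A] [Fintype A'] [DecidableEq A']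
    [Fintype a] [DecidableEq a] [Fintype a'] [DecidableEq a']
    (V : Matrix (A × A') (a × a') ℂ) (hV : Vᴴ * V = 1)
    (o : Matrix a a ℂ) (ho : o.IsHermitian)
    (hyp : ∀ ψ φ : a × a' → ℂ, star ψ ⬝ᵥ ψ = 1 → star φ ⬝ᵥ φ = 1 →
      ptrA (vecMulVec ψ (star ψ)) = ptrA (vecMulVec φ (star φ)) →
      ptrA (vecMulVec (V.mulVec ψ) (star (V.mulVec ψ)))
        = ptrA (vecMulVec (V.mulVec φ) (star (V.mulVec φ)))) :
    ∀ (x : Matrix A' A' ℂ) (φ : a × a' → ℂ), star φ ⬝ᵥ φ = 1 →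
      star (V.mulVec φ) ⬝ᵥ
        ((V * (o ⊗ₖ (1 : Matrix a' a' ℂ)) * Vᴴ * ((1 : Matrix A A ℂ) ⊗ₖ x)
          - ((1 : Matrix A A ℂ) ⊗ₖ x) * (V * (o ⊗ₖ (1 : Matrix a' a' ℂ)) * Vᴴ)).mulVec
          (V.mulVec φ)) = 0 :=
  dhw_commutant_step_general V hV o ho hyp
end

section
/- Knill–Laflamme implies correctability of erasure for the 3-qutrit code: for any single-qutrit operator E acting on site k, the projector P onto the 3-qutrit code satisfies P E P = c_E P for a scalar c_E. -/
open Matrix Kronecker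
open scoped ComplexOrder

/-- The three codewords of the 3-qutrit code. -/
noncomputable def qutritCW (m : Fin 3) : Fin 3 × Fin 3 × Fin 3 → ℂ :=
  fun x => if x.2.1 = x.1 + m ∧ x.2.2 = x.1 + m + m
    then ((Real.sqrt 3)⁻¹ : ℝ) else 0

/-- Partial trace keeping the first qutrit. -/
noncomputable def pt1 (ρ : Matrix (Fin 3 × Fin 3 × Fin 3) (Fin 3 × Fin 3 × Fin 3) ℂ) :
    Matrix (Fin 3) (Fin 3) ℂ :=
  Matrix.of fun i j => ∑ b : Fin 3, ∑ c : Fin 3, ρ (i, b, c) (j, b, c)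

/-- Partial trace keeping the second qutrit. -/
noncomputable def pt2 (ρ : Matrix (Fin 3 × Fin 3 × Fin 3) (Fin 3 × Fin 3 × Fin 3) ℂ) :
    Matrix (Fin 3) (Fin 3) ℂ :=
  Matrix.of fun i j => ∑ a : Fin 3, ∑ c : Fin 3, ρ (a, i, c) (a, j, c)

/-- Partial trace keeping the third qutrit. -/
noncomputable def pt3 (ρ : Matrix (Fin 3 × Fin 3 × Fin 3) (Fin 3 × Fin 3 × Fin 3) ℂ) :
    Matrix (Fin 3) (Fin 3) ℂ :=
  Matrix.of fun i j => ∑ a : Fin 3, ∑ b : Fin 3, ρ (a, b, i) (a, b, j)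

/-- The projector onto the 3-qutrit code. -/
noncomputable def qutritProj : Matrix (Fin 3 × Fin 3 × Fin 3) (Fin 3 × Fin 3 × Fin 3) ℂ :=
  ∑ m : Fin 3, vecMulVec (qutritCW m) (star (qutritCW m))

/-!
Write `|m̃⟩ = 3^{-1/2} ∑ₐ |a, a + m, a + 2m⟩` and `P = ∑ₘ |m̃⟩⟨m̃|`. Then
`P E P = ∑_{m,m'} ⟨m̃|E|m̃'⟩ |m̃⟩⟨m̃'|`, so it suffices that `⟨m̃|E|m̃'⟩ = δ_{mm'} Tr(e)/3`.
An operator on site `k` is the identity on the other two sites, and any two of the three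
entries `a, a + m, a + 2m` determine `(a, m)` (for sites `1, 3` because `2` is invertible
mod `3`). Hence only diagonal terms `a = a'`, `m = m'` survive, and they sum to `Tr e / 3`.
-/

section Sandwich

variable {ι n R : Type*} [Fintype ι] [DecidableEq ι] [Fintype n] [CommSemiring R]

theorem vecMulVec_mul_mul_vecMulVec (u v w x : n → R) (M : Matrix n n R) :
    vecMulVec u v * M * vecMulVec w x = (v ⬝ᵥ M *ᵥ w) • vecMulVec u x := by
  rw [vecMulVec_mul, vecMulVec_mul_vecMulVec, ← dotProduct_mulVec, vecMulVec_smul]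

theorem sum_vecMulVec_star_mul_mul_eq_smul [StarRing R] (v : ι → n → R) (M : Matrix n n R) (c : R)
    (h : ∀ i j, star (v i) ⬝ᵥ M *ᵥ v j = if i = j then c else 0) :
    (∑ i, vecMulVec (v i) (star (v i))) * M * ∑ i, vecMulVec (v i) (star (v i))
      = c • ∑ i, vecMulVec (v i) (star (v i)) := by
  simp only [Finset.sum_mul, Finset.mul_sum, vecMulVec_mul_mul_vecMulVec, h, ite_smul, zero_smul,
    Finset.sum_ite_eq', Finset.mem_univ, if_true, Finset.smul_sum]

end Sandwich

section ArithmeticProgression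

variable {G : Type*} [AddCancelCommMonoid G] {a a' m m' : G}

theorem add_add_eq_add_add_and_add_eq_add_iff :
    a + m + m = a' + m' + m' ∧ a + m = a' + m' ↔ a = a' ∧ m = m' := by
  refine ⟨fun ⟨h₂, h₁⟩ => ?_, fun ⟨rfl, rfl⟩ => ⟨rfl, rfl⟩⟩
  have hm : m = m' := add_left_cancel (h₁ ▸ h₂)
  exact ⟨add_right_cancel (hm ▸ h₁), hm⟩

theorem add_add_eq_add_add_and_eq_iff (h : Function.Injective fun m : G => m + m) :
    a + m + m = a' + m' + m' ∧ a = a' ↔ a = a' ∧ m = m' := by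
  refine ⟨fun ⟨h₂, ha⟩ => ⟨ha, h ?_⟩, fun ⟨rfl, rfl⟩ => ⟨rfl, rfl⟩⟩
  subst ha
  simpa only [add_assoc, add_right_inj] using h₂

theorem add_eq_add_and_eq_iff : a + m = a' + m' ∧ a = a' ↔ a = a' ∧ m = m' := by
  refine ⟨fun ⟨h₁, ha⟩ => ⟨ha, ?_⟩, fun ⟨rfl, rfl⟩ => ⟨rfl, rfl⟩⟩
  subst ha
  exact add_left_cancel h₁

end ArithmeticProgression

theorem Fin.three_add_self_injective : Function.Injective fun m : Fin 3 => m + m := by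
  decide

theorem star_qutritCW_dotProduct_mulVec
    (M : Matrix (Fin 3 × Fin 3 × Fin 3) (Fin 3 × Fin 3 × Fin 3) ℂ) (m m' : Fin 3) :
    star (qutritCW m) ⬝ᵥ M *ᵥ qutritCW m'
      = (∑ a, ∑ a', M (a, a + m, a + m + m) (a', a' + m', a' + m' + m')) / 3 := by
  have h3 : (((√3)⁻¹ : ℝ) : ℂ) * (((√3)⁻¹ : ℝ) : ℂ) = 1 / 3 := by
    rw [← Complex.ofReal_mul, ← mul_inv, Real.mul_self_sqrt (by norm_num)]
    norm_num
  simp only [dotProduct, mulVec, qutritCW, Fintype.sum_prod_type, ite_and, Pi.star_apply,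
    apply_ite star, star_zero, Complex.star_def, Complex.conj_ofReal, mul_ite, mul_zero,
    ite_mul, zero_mul, Finset.sum_ite_irrel, Finset.sum_const_zero, Finset.sum_ite_eq',
    Finset.mem_univ, if_true, Finset.sum_div, Finset.mul_sum]
  refine Finset.sum_congr rfl fun a _ => Finset.sum_congr rfl fun a' _ => ?_
  linear_combination M (a, a + m, a + m + m) (a', a' + m', a' + m' + m') * h3

theorem qutritProj_mul_mul_qutritProj_eq_smul
    (M : Matrix (Fin 3 × Fin 3 × Fin 3) (Fin 3 × Fin 3 × Fin 3) ℂ) (d : Fin 3 → Fin 3 → ℂ) (c : ℂ)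
    (hM : ∀ a m a' m', M (a, a + m, a + m + m) (a', a' + m', a' + m' + m')
      = if a = a' ∧ m = m' then d m a else 0)
    (hd : ∀ m, ∑ a, d m a = c) :
    qutritProj * M * qutritProj = (c / 3) • qutritProj := by
  refine sum_vecMulVec_star_mul_mul_eq_smul _ _ _ fun m m' => ?_
  simp only [star_qutritCW_dotProduct_mulVec, hM, ite_and, Finset.sum_ite_eq, Finset.mem_univ,
    if_true]
  split_ifs with h
  · rw [h, hd]
  · simp

theorem sum_apply_add_apply_add_eq_trace {G R : Type*} [Fintype G] [AddGroup G] [AddCommMonoid R]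
    (e : Matrix G G R) (c : G) : ∑ a, e (a + c) (a + c) = e.trace :=
  Fintype.sum_equiv (Equiv.addRight c) _ (fun a => e a a) fun _ => rfl

theorem kronecker_one_one_apply (e : Matrix (Fin 3) (Fin 3) ℂ) (a m a' m' : Fin 3) :
    (e ⊗ₖ ((1 : Matrix (Fin 3) (Fin 3) ℂ) ⊗ₖ (1 : Matrix (Fin 3) (Fin 3) ℂ)))
      (a, a + m, a + m + m) (a', a' + m', a' + m' + m') = if a = a' ∧ m = m' then e a a else 0 := by
  simp only [kroneckerMap_apply, one_apply, mul_ite, mul_one, mul_zero, ← ite_and,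
    add_add_eq_add_add_and_add_eq_add_iff]
  split_ifs with h
  · obtain ⟨rfl, rfl⟩ := h; rfl
  · rfl

theorem one_kronecker_kronecker_one_apply (e : Matrix (Fin 3) (Fin 3) ℂ) (a m a' m' : Fin 3) :
    ((1 : Matrix (Fin 3) (Fin 3) ℂ) ⊗ₖ (e ⊗ₖ (1 : Matrix (Fin 3) (Fin 3) ℂ)))
      (a, a + m, a + m + m) (a', a' + m', a' + m' + m')
      = if a = a' ∧ m = m' then e (a + m) (a + m) else 0 := by
  simp only [kroneckerMap_apply, one_apply, mul_ite, mul_one, mul_zero, ite_mul, one_mul, zero_mul,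
    ← ite_and, add_add_eq_add_add_and_eq_iff Fin.three_add_self_injective]
  split_ifs with h
  · obtain ⟨rfl, rfl⟩ := h; rfl
  · rfl

theorem one_kronecker_one_kronecker_apply (e : Matrix (Fin 3) (Fin 3) ℂ) (a m a' m' : Fin 3) :
    ((1 : Matrix (Fin 3) (Fin 3) ℂ) ⊗ₖ ((1 : Matrix (Fin 3) (Fin 3) ℂ) ⊗ₖ e))
      (a, a + m, a + m + m) (a', a' + m', a' + m' + m')
      = if a = a' ∧ m = m' then e (a + m + m) (a + m + m) else 0 := by
  simp only [kroneckerMap_apply, one_apply, mul_ite, mul_zero, ite_mul, one_mul, zero_mul,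
    ← ite_and, add_eq_add_and_eq_iff]
  split_ifs with h
  · obtain ⟨rfl, rfl⟩ := h; rfl
  · rfl

/-- Knill–Laflamme for single-qutrit errors on the 3-qutrit code:
P E P = (Tr e / 3) P for any operator e acting on a single site. -/
theorem three_qutrit_knill_laflamme (e : Matrix (Fin 3) (Fin 3) ℂ) :
    qutritProj * (e ⊗ₖ ((1 : Matrix (Fin 3) (Fin 3) ℂ) ⊗ₖ (1 : Matrix (Fin 3) (Fin 3) ℂ)))
        * qutritProj = (e.trace / 3) • qutritProj ∧
    qutritProj * ((1 : Matrix (Fin 3) (Fin 3) ℂ) ⊗ₖ (e ⊗ₖ (1 : Matrix (Fin 3) (Fin 3) ℂ)))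
        * qutritProj = (e.trace / 3) • qutritProj ∧
    qutritProj * ((1 : Matrix (Fin 3) (Fin 3) ℂ) ⊗ₖ ((1 : Matrix (Fin 3) (Fin 3) ℂ) ⊗ₖ e))
        * qutritProj = (e.trace / 3) • qutritProj := by
  refine ⟨?_, ?_, ?_⟩
  · exact qutritProj_mul_mul_qutritProj_eq_smul _ _ _ (kronecker_one_one_apply e) fun _ => rfl
  · exact qutritProj_mul_mul_qutritProj_eq_smul _ _ _ (one_kronecker_kronecker_one_apply e)
      (sum_apply_add_apply_add_eq_trace e)
  · refine qutritProj_mul_mul_qutritProj_eq_smul _ _ _ (one_kronecker_one_kronecker_apply e)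
      fun m => ?_
    simpa only [add_assoc] using sum_apply_add_apply_add_eq_trace e (m + m)
end

section
/- Saturation of strong subadditivity by quantum Markov states: if a tripartite density matrix has the form ρ_{ABC} = ⊕_i p_i ρ_{A B¹_i} ⊗ ρ_{B²_i C} with respect to a decomposition H_B = ⊕_i H_{B¹_i} ⊗ H_{B²_i}, then S(ρ_{AB}) + S(ρ_{BC}) = S(ρ_B) + S(ρ_{ABC}). -/
open Matrix Kronecker
open scoped ComplexOrder

/-- Partial trace over the third factor of a tripartite system. -/
noncomputable def ptrC3 {A B C : Type*} [Fintype A] [Fintype B] [Fintype C]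
    (ρ : Matrix (A × B × C) (A × B × C) ℂ) : Matrix (A × B) (A × B) ℂ :=
  Matrix.of fun x y => ∑ c : C, ρ (x.1, x.2, c) (y.1, y.2, c)

/-- Partial trace over the first factor of a tripartite system. -/
noncomputable def ptrA3 {A B C : Type*} [Fintype A] [Fintype B] [Fintype C]
    (ρ : Matrix (A × B × C) (A × B × C) ℂ) : Matrix (B × C) (B × C) ℂ :=
  Matrix.of fun x y => ∑ a : A, ρ (a, x) (a, y)

/-- Reduced state on the middle factor of a tripartite system. -/
noncomputable def ptrB3 {A B C : Type*} [Fintype A] [Fintype B] [Fintype C]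
    (ρ : Matrix (A × B × C) (A × B × C) ℂ) : Matrix B B ℂ :=
  Matrix.of fun b b' => ∑ a : A, ∑ c : C, ρ (a, b, c) (a, b', c)

/-! ### Auxiliary machinery -/

namespace SSAaux
open Polynomial

noncomputable def φ (x : ℝ) : ℝ := x * Real.log x

lemma φ_mul (x y : ℝ) : φ (x * y) = y * φ x + x * φ y := by
  rcases eq_or_ne x 0 with rfl|hx
  · simp [φ]
  rcases eq_or_ne y 0 with rfl|hy
  · simp [φ]
  simp only [φ, Real.log_mul hx hy]; ring

lemma double_sum_phi {K L : Type*} [Fintype K] [Fintype L] (P : ℝ)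
    (q : K → ℝ) (r : L → ℝ) (hq : ∑ k, q k = 1) (hr : ∑ l, r l = 1) :
    ∑ k, ∑ l, φ (P * q k * r l) =
      φ P + P * (∑ k, φ (q k)) + P * (∑ l, φ (r l)) := by
  have key : ∀ k l, φ (P * q k * r l) =
      (q k * r l) * φ P + (r l * φ (q k)) * P + (q k * φ (r l)) * P := by
    intro k l
    rw [mul_assoc, φ_mul, φ_mul]
    ring
  simp only [key, Finset.sum_add_distrib, ← Finset.sum_mul, ← Finset.mul_sum, hq, hr]
  ring

section Spectral
variable {n : Type*} [Fintype n] [DecidableEq n]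

lemma charpoly_unitary_conj {V : Matrix n n ℂ} (hV1 : V * Vᴴ = 1) (hV2 : Vᴴ * V = 1)
    (N : Matrix n n ℂ) : (V * N * Vᴴ).charpoly = N.charpoly := by
  have hmap1 : (V.map C) * (Vᴴ.map C) = 1 := by
    rw [← Matrix.map_mul, hV1]
    simp [Matrix.map_one]
  have hmap2 : (Vᴴ.map C) * (V.map C) = 1 := by
    rw [← Matrix.map_mul, hV2]
    simp [Matrix.map_one]
  have hcm : charmatrix (V * N * Vᴴ) = (V.map C) * charmatrix N * (Vᴴ.map C) := by
    unfold charmatrix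
    simp only [RingHom.mapMatrix_apply, Matrix.mul_sub, Matrix.sub_mul]
    congr 1
    · rw [scalar_apply, ← Matrix.smul_one_eq_diagonal, Matrix.mul_smul, smul_mul_assoc,
        Matrix.mul_one, hmap1]
    · rw [Matrix.map_mul, Matrix.map_mul]
  unfold Matrix.charpoly
  rw [hcm, Matrix.det_mul, Matrix.det_mul, mul_comm, ← mul_assoc, ← Matrix.det_mul, hmap2,
    Matrix.det_one, one_mul]

lemma charpoly_diagonal (c : n → ℂ) :
    (Matrix.diagonal c).charpoly = ∏ k, (X - C (c k)) := by
  have hcm : charmatrix (Matrix.diagonal c) = Matrix.diagonal (fun k => X - C (c k)) := by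
    ext i j
    by_cases h : i = j
    · subst h; simp
    · simp [h, Matrix.diagonal_apply_ne _ h]
  rw [Matrix.charpoly, hcm, Matrix.det_diagonal]

lemma charpoly_eq_prod {M V : Matrix n n ℂ} (hV1 : V * Vᴴ = 1) (hV2 : Vᴴ * V = 1)
    (d : n → ℝ) (hM : M = V * Matrix.diagonal (fun k => (d k : ℂ)) * Vᴴ) :
    M.charpoly = ∏ k, (X - C ((d k : ℂ))) := by
  rw [hM, charpoly_unitary_conj hV1 hV2, charpoly_diagonal]

lemma unitary_conj_isHermitian {M V : Matrix n n ℂ}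
    (d : n → ℝ) (hM : M = V * Matrix.diagonal (fun k => (d k : ℂ)) * Vᴴ) :
    M.IsHermitian := by
  subst hM
  unfold Matrix.IsHermitian
  rw [conjTranspose_mul, conjTranspose_mul, conjTranspose_conjTranspose,
    Matrix.diagonal_conjTranspose, Matrix.mul_assoc]
  congr 2
  ext k
  simp [Pi.star_def]

lemma eigenvectorUnitary_mul_conjTranspose {A : Matrix n n ℂ} (hA : A.IsHermitian) :
    (hA.eigenvectorUnitary : Matrix n n ℂ) * (hA.eigenvectorUnitary : Matrix n n ℂ)ᴴ = 1 := by
  rw [← Matrix.star_eq_conjTranspose]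
  exact (Matrix.mem_unitaryGroup_iff).mp hA.eigenvectorUnitary.2

lemma conjTranspose_mul_eigenvectorUnitary {A : Matrix n n ℂ} (hA : A.IsHermitian) :
    (hA.eigenvectorUnitary : Matrix n n ℂ)ᴴ * (hA.eigenvectorUnitary : Matrix n n ℂ) = 1 := by
  rw [← Matrix.star_eq_conjTranspose]
  exact (Matrix.mem_unitaryGroup_iff').mp hA.eigenvectorUnitary.2

lemma spectral_theorem' {A : Matrix n n ℂ} (hA : A.IsHermitian) :
    A = (hA.eigenvectorUnitary : Matrix n n ℂ) *
      Matrix.diagonal (fun k => (hA.eigenvalues k : ℂ)) *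
      (hA.eigenvectorUnitary : Matrix n n ℂ)ᴴ := by
  rw [← Matrix.star_eq_conjTranspose]
  exact hA.spectral_theorem

lemma sum_g_eigenvalues {M V : Matrix n n ℂ} (hM' : M.IsHermitian)
    (hV1 : V * Vᴴ = 1) (hV2 : Vᴴ * V = 1)
    (d : n → ℝ) (hM : M = V * Matrix.diagonal (fun k => (d k : ℂ)) * Vᴴ)
    (g : ℝ → ℝ) : ∑ k, g (hM'.eigenvalues k) = ∑ k, g (d k) := by
  have h1 : M.charpoly = ∏ k, (X - C ((hM'.eigenvalues k : ℂ))) :=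
    charpoly_eq_prod (eigenvectorUnitary_mul_conjTranspose hM')
      (conjTranspose_mul_eigenvectorUnitary hM') _ (spectral_theorem' hM')
  have h2 : M.charpoly = ∏ k, (X - C ((d k : ℂ))) := charpoly_eq_prod hV1 hV2 d hM
  have hroots : ∀ c : n → ℂ, (∏ k, (X - C (c k))).roots = Finset.univ.val.map c := by
    intro c
    have : (∏ k, (X - C (c k))) = ((Finset.univ.val.map c).map (fun a => X - C a)).prod := by
      rw [Multiset.map_map]
      rfl
    rw [this, Polynomial.roots_multiset_prod_X_sub_C]
  have hms : Finset.univ.val.map (fun k => ((hM'.eigenvalues k : ℂ)))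
      = Finset.univ.val.map (fun k => ((d k : ℂ))) := by
    have := congrArg Polynomial.roots (h1.symm.trans h2)
    rwa [hroots, hroots] at this
  have hms2 := congrArg (Multiset.map (fun z : ℂ => g z.re)) hms
  rw [Multiset.map_map, Multiset.map_map] at hms2
  simp only [Function.comp_def, Complex.ofReal_re] at hms2
  calc ∑ k, g (hM'.eigenvalues k)
      = (Finset.univ.val.map (fun k => g (hM'.eigenvalues k))).sum := rfl
    _ = (Finset.univ.val.map (fun k => g (d k))).sum := by rw [hms2]
    _ = ∑ k, g (d k) := rfl

lemma trace_phi_eigen {M : Matrix n n ℂ} (hM' : M.IsHermitian) :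
    (M * matLog M).trace = ((∑ k, φ (hM'.eigenvalues k) : ℝ) : ℂ) := by
  have hlog : matLog M = (hM'.eigenvectorUnitary : Matrix n n ℂ) *
      Matrix.diagonal (fun k => ((Real.log (hM'.eigenvalues k) : ℝ) : ℂ)) *
      (hM'.eigenvectorUnitary : Matrix n n ℂ)ᴴ := by
    rw [matLog, cfcH, dif_pos hM', Matrix.star_eq_conjTranspose]
  set U := (hM'.eigenvectorUnitary : Matrix n n ℂ)
  have key : M * matLog M = U * Matrix.diagonal
      (fun k => ((hM'.eigenvalues k : ℂ)) * ((Real.log (hM'.eigenvalues k) : ℝ) : ℂ)) * Uᴴ := by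
    conv_lhs => rw [hlog]
    conv_lhs => lhs; rw [spectral_theorem' hM']
    rw [← Matrix.diagonal_mul_diagonal]
    have : (U * Matrix.diagonal (fun k => ((hM'.eigenvalues k : ℂ))) * Uᴴ) *
        (U * Matrix.diagonal (fun k => ((Real.log (hM'.eigenvalues k) : ℝ) : ℂ)) * Uᴴ)
        = U * (Matrix.diagonal (fun k => ((hM'.eigenvalues k : ℂ))) * ((Uᴴ * U) *
          Matrix.diagonal (fun k => ((Real.log (hM'.eigenvalues k) : ℝ) : ℂ)))) * Uᴴ := by
      simp only [Matrix.mul_assoc]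
    rw [this, conjTranspose_mul_eigenvectorUnitary hM', Matrix.one_mul, ← Matrix.mul_assoc]
  rw [key, Matrix.trace_mul_cycle,
    conjTranspose_mul_eigenvectorUnitary hM', Matrix.one_mul, Matrix.trace_diagonal]
  push_cast [φ]
  rfl

lemma vN_eq {M V : Matrix n n ℂ}
    (hV1 : V * Vᴴ = 1) (hV2 : Vᴴ * V = 1)
    (d : n → ℝ) (hM : M = V * Matrix.diagonal (fun k => (d k : ℂ)) * Vᴴ) :
    vN M = -∑ k, φ (d k) := by
  have hM' : M.IsHermitian := unitary_conj_isHermitian d hM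
  have := trace_phi_eigen hM'
  rw [vN, this, sum_g_eigenvalues hM' hV1 hV2 d hM φ]
  simp

lemma sum_eig_eq_one {A : Matrix n n ℂ} (hA : A.IsHermitian) (h : A.trace = 1) :
    ∑ k, hA.eigenvalues k = 1 := by
  have hsp := spectral_theorem' hA
  have hUU := conjTranspose_mul_eigenvectorUnitary hA
  have : A.trace = ((∑ k, hA.eigenvalues k : ℝ) : ℂ) := by
    conv_lhs => rw [hsp]
    rw [Matrix.trace_mul_cycle, hUU, Matrix.one_mul, Matrix.trace_diagonal]
    push_cast; rfl
  rw [h] at this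
  exact_mod_cast this.symm

end Spectral

lemma kron_conjTranspose {l m o p : Type*} (A : Matrix l m ℂ) (B : Matrix o p ℂ) :
    (A ⊗ₖ B)ᴴ = Aᴴ ⊗ₖ Bᴴ := by
  ext i j
  simp [Matrix.conjTranspose_apply, Matrix.kroneckerMap_apply, mul_comm]

lemma vN_blockKron {ι : Type*} [Fintype ι] [DecidableEq ι]
    (B1 B2 : ι → Type*) [∀ i, Fintype (B1 i)] [∀ i, DecidableEq (B1 i)]
    [∀ i, Fintype (B2 i)] [∀ i, DecidableEq (B2 i)]
    {N : Type*} [Fintype N] [DecidableEq N] (e : N ≃ Σ i, B1 i × B2 i)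
    (p : ι → ℝ)
    (M1 : ∀ i, Matrix (B1 i) (B1 i) ℂ) (hM1 : ∀ i, (M1 i).IsHermitian)
    (M2 : ∀ i, Matrix (B2 i) (B2 i) ℂ) (hM2 : ∀ i, (M2 i).IsHermitian)
    (M : Matrix N N ℂ)
    (hM : M = (Matrix.blockDiagonal' fun i => (p i : ℂ) • (M1 i ⊗ₖ M2 i)).submatrix e e) :
    vN M = -∑ i, ∑ k : B1 i, ∑ l : B2 i,
      φ (p i * (hM1 i).eigenvalues k * (hM2 i).eigenvalues l) := by
  classical
  set U : ∀ i, Matrix (B1 i × B2 i) (B1 i × B2 i) ℂ :=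
    fun i => ((hM1 i).eigenvectorUnitary : Matrix _ _ ℂ) ⊗ₖ
      ((hM2 i).eigenvectorUnitary : Matrix _ _ ℂ) with hU
  set dd : (Σ i, B1 i × B2 i) → ℝ :=
    fun y => p y.1 * (hM1 y.1).eigenvalues y.2.1 * (hM2 y.1).eigenvalues y.2.2 with hdd
  have hUU1 : ∀ i, U i * (U i)ᴴ = 1 := by
    intro i
    rw [hU, kron_conjTranspose, ← Matrix.mul_kronecker_mul,
      eigenvectorUnitary_mul_conjTranspose (hM1 i),
      eigenvectorUnitary_mul_conjTranspose (hM2 i), Matrix.one_kronecker_one]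
  have hUU2 : ∀ i, (U i)ᴴ * U i = 1 := by
    intro i
    rw [hU, kron_conjTranspose, ← Matrix.mul_kronecker_mul,
      conjTranspose_mul_eigenvectorUnitary (hM1 i),
      conjTranspose_mul_eigenvectorUnitary (hM2 i), Matrix.one_kronecker_one]
  have hblock : ∀ i, (p i : ℂ) • (M1 i ⊗ₖ M2 i) =
      U i * Matrix.diagonal (fun kl : B1 i × B2 i => ((dd ⟨i, kl⟩ : ℝ) : ℂ)) * (U i)ᴴ := by
    intro i
    conv_lhs => rw [spectral_theorem' (hM1 i), spectral_theorem' (hM2 i)]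
    rw [Matrix.mul_kronecker_mul, Matrix.mul_kronecker_mul,
      Matrix.diagonal_kronecker_diagonal, hU, kron_conjTranspose]
    rw [← smul_mul_assoc, ← mul_smul_comm, ← Matrix.diagonal_smul]
    congr 2
    apply congrArg
    funext mn
    simp only [hdd, Pi.smul_apply, smul_eq_mul]
    push_cast
    ring
  set V : Matrix N N ℂ := (Matrix.blockDiagonal' U).submatrix e e with hV
  have hV1 : V * Vᴴ = 1 := by
    rw [hV, Matrix.conjTranspose_submatrix, Matrix.submatrix_mul_equiv,
      Matrix.blockDiagonal'_conjTranspose, ← Matrix.blockDiagonal'_mul]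
    simp only [hUU1]
    rw [show (fun k => (1 : Matrix (B1 k × B2 k) (B1 k × B2 k) ℂ)) = 1 from rfl,
      Matrix.blockDiagonal'_one, Matrix.submatrix_one_equiv]
  have hV2 : Vᴴ * V = 1 := by
    rw [hV, Matrix.conjTranspose_submatrix, Matrix.submatrix_mul_equiv,
      Matrix.blockDiagonal'_conjTranspose, ← Matrix.blockDiagonal'_mul]
    simp only [hUU2]
    rw [show (fun k => (1 : Matrix (B1 k × B2 k) (B1 k × B2 k) ℂ)) = 1 from rfl,
      Matrix.blockDiagonal'_one, Matrix.submatrix_one_equiv]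
  have hMdec : M = V * Matrix.diagonal (fun x => ((dd (e x) : ℝ) : ℂ)) * Vᴴ := by
    have hfun : (fun i => (p i : ℂ) • (M1 i ⊗ₖ M2 i)) =
        fun i => U i * Matrix.diagonal (fun kl : B1 i × B2 i => ((dd ⟨i, kl⟩ : ℝ) : ℂ)) * (U i)ᴴ :=
      funext hblock
    rw [hM, hfun, Matrix.blockDiagonal'_mul, Matrix.blockDiagonal'_mul]
    have hdiag : (Matrix.blockDiagonal' fun i =>
        Matrix.diagonal (fun kl : B1 i × B2 i => ((dd ⟨i, kl⟩ : ℝ) : ℂ))) =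
        Matrix.diagonal (fun y : Σ i, B1 i × B2 i => ((dd y : ℝ) : ℂ)) := by
      rw [Matrix.blockDiagonal'_diagonal]
    have hds : (Matrix.diagonal fun x : N => ((dd (e x) : ℝ) : ℂ)) =
        (Matrix.diagonal fun y => ((dd y : ℝ) : ℂ)).submatrix e e := by
      rw [Matrix.submatrix_diagonal_equiv]; rfl
    rw [hdiag, ← Matrix.blockDiagonal'_conjTranspose, hV, Matrix.conjTranspose_submatrix, hds,
      Matrix.submatrix_mul_equiv, Matrix.submatrix_mul_equiv]
  rw [vN_eq hV1 hV2 _ hMdec]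
  congr 1
  rw [Equiv.sum_comp e (fun y => φ (dd y)), ← Finset.univ_sigma_univ, Finset.sum_sigma]
  apply Finset.sum_congr rfl
  intro i _
  rw [Fintype.sum_prod_type]

lemma ptrB_isHermitian {A B : Type*} [Fintype A] [Fintype B]
    {ρ : Matrix (A × B) (A × B) ℂ} (h : ρ.IsHermitian) : (ptrB ρ).IsHermitian := by
  ext i j
  simp only [Matrix.conjTranspose_apply, ptrB, Matrix.of_apply, star_sum]
  exact Finset.sum_congr rfl fun b _ => by rw [← Matrix.conjTranspose_apply, h]

lemma ptrA_isHermitian {A B : Type*} [Fintype A] [Fintype B]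
    {ρ : Matrix (A × B) (A × B) ℂ} (h : ρ.IsHermitian) : (ptrA ρ).IsHermitian := by
  ext i j
  simp only [Matrix.conjTranspose_apply, ptrA, Matrix.of_apply, star_sum]
  exact Finset.sum_congr rfl fun b _ => by rw [← Matrix.conjTranspose_apply, h]

lemma ptrB_trace {A B : Type*} [Fintype A] [Fintype B]
    (ρ : Matrix (A × B) (A × B) ℂ) : (ptrB ρ).trace = ρ.trace := by
  simp only [Matrix.trace, Matrix.diag, ptrB, Matrix.of_apply]
  rw [Fintype.sum_prod_type]

lemma ptrA_trace {A B : Type*} [Fintype A] [Fintype B]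
    (ρ : Matrix (A × B) (A × B) ℂ) : (ptrA ρ).trace = ρ.trace := by
  simp only [Matrix.trace, Matrix.diag, ptrA, Matrix.of_apply]
  rw [Fintype.sum_prod_type]
  rw [Finset.sum_comm]

end SSAaux

open SSAaux in
/-- Quantum Markov states, block diagonal with respect to a decomposition
H_B = ⊕_i H_{B¹_i} ⊗ H_{B²_i} as ρ_{ABC} = ⊕_i p_i ρ_{AB¹_i} ⊗ ρ_{B²_iC},
saturate strong subadditivity. -/
theorem markov_states_saturate_SSA
    {ι A C : Type*} [Fintype ι] [DecidableEq ι] [Fintype A] [DecidableEq A]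
    [Fintype C] [DecidableEq C]
    (B1 B2 : ι → Type*) [∀ i, Fintype (B1 i)] [∀ i, DecidableEq (B1 i)]
    [∀ i, Fintype (B2 i)] [∀ i, DecidableEq (B2 i)]
    (p : ι → ℝ) (hp0 : ∀ i, 0 ≤ p i) (hp1 : ∑ i, p i = 1)
    (ρ1 : ∀ i, Matrix (A × B1 i) (A × B1 i) ℂ) (h1 : ∀ i, IsDensity (ρ1 i))
    (ρ2 : ∀ i, Matrix (B2 i × C) (B2 i × C) ℂ) (h2 : ∀ i, IsDensity (ρ2 i))
    (ρABC : Matrix (A × (Σ i, B1 i × B2 i) × C) (A × (Σ i, B1 i × B2 i) × C) ℂ)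
    (hρ : ∀ x y : A × (Σ i, B1 i × B2 i) × C,
      ρABC x y = if h : x.2.1.1 = y.2.1.1 then
        (p x.2.1.1 : ℂ) *
          ρ1 x.2.1.1 (x.1, x.2.1.2.1) (y.1, cast (congrArg B1 h).symm y.2.1.2.1) *
          ρ2 x.2.1.1 (x.2.1.2.2, x.2.2) (cast (congrArg B2 h).symm y.2.1.2.2, y.2.2)
      else 0) :
    vN (ptrC3 ρABC) + vN (ptrA3 ρABC) = vN (ptrB3 ρABC) + vN ρABC := by
  classical
  -- Hermitian structure
  have hH1 : ∀ i, (ρ1 i).IsHermitian := fun i => (h1 i).1.1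
  have hH2 : ∀ i, (ρ2 i).IsHermitian := fun i => (h2 i).1.1
  have hσ1 : ∀ i, (ptrA (ρ1 i)).IsHermitian := fun i => ptrA_isHermitian (hH1 i)
  have hσ2 : ∀ i, (ptrB (ρ2 i)).IsHermitian := fun i => ptrB_isHermitian (hH2 i)
  -- equivalences
  let eABC : A × (Σ i, B1 i × B2 i) × C ≃ Σ i, ((A × B1 i) × (B2 i × C)) :=
    { toFun := fun x => ⟨x.2.1.1, ((x.1, x.2.1.2.1), (x.2.1.2.2, x.2.2))⟩
      invFun := fun y => (y.2.1.1, ⟨y.1, (y.2.1.2, y.2.2.1)⟩, y.2.2.2)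
      left_inv := by rintro ⟨a, ⟨i, b1, b2⟩, c⟩; rfl
      right_inv := by rintro ⟨i, ⟨⟨a, b1⟩, ⟨b2, c⟩⟩⟩; rfl }
  let eAB : A × (Σ i, B1 i × B2 i) ≃ Σ i, ((A × B1 i) × B2 i) :=
    { toFun := fun x => ⟨x.2.1, ((x.1, x.2.2.1), x.2.2.2)⟩
      invFun := fun y => (y.2.1.1, ⟨y.1, (y.2.1.2, y.2.2)⟩)
      left_inv := by rintro ⟨a, ⟨i, b1, b2⟩⟩; rfl
      right_inv := by rintro ⟨i, ⟨⟨a, b1⟩, b2⟩⟩; rfl }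
  let eBC : (Σ i, B1 i × B2 i) × C ≃ Σ i, (B1 i × (B2 i × C)) :=
    { toFun := fun x => ⟨x.1.1, (x.1.2.1, (x.1.2.2, x.2))⟩
      invFun := fun y => (⟨y.1, (y.2.1, y.2.2.1)⟩, y.2.2.2)
      left_inv := by rintro ⟨⟨i, b1, b2⟩, c⟩; rfl
      right_inv := by rintro ⟨i, ⟨b1, ⟨b2, c⟩⟩⟩; rfl }
  let eB : (Σ i, B1 i × B2 i) ≃ Σ i, (B1 i × B2 i) := Equiv.refl _
  -- identification of the four states
  have hABC : ρABC =
      (Matrix.blockDiagonal' fun i => (p i : ℂ) • (ρ1 i ⊗ₖ ρ2 i)).submatrix eABC eABC := by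
    ext x y
    obtain ⟨a, ⟨i, b1, b2⟩, c⟩ := x
    obtain ⟨a', ⟨j, b1', b2'⟩, c'⟩ := y
    rw [hρ]
    simp only [Matrix.submatrix_apply]
    show _ = Matrix.blockDiagonal' _ ⟨i, _⟩ ⟨j, _⟩
    rw [Matrix.blockDiagonal'_apply']
    by_cases h : i = j
    · subst h
      simp [Matrix.kroneckerMap_apply, mul_assoc]
    · simp [h]
  have hAB : ptrC3 ρABC =
      (Matrix.blockDiagonal' fun i => (p i : ℂ) • (ρ1 i ⊗ₖ ptrB (ρ2 i))).submatrix eAB eAB := by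
    ext x y
    obtain ⟨a, ⟨i, b1, b2⟩⟩ := x
    obtain ⟨a', ⟨j, b1', b2'⟩⟩ := y
    simp only [ptrC3, Matrix.of_apply, Matrix.submatrix_apply]
    show _ = Matrix.blockDiagonal' _ ⟨i, _⟩ ⟨j, _⟩
    rw [Matrix.blockDiagonal'_apply']
    simp only [hρ]
    by_cases h : i = j
    · subst h
      simp [ptrB, Matrix.kroneckerMap_apply, Finset.mul_sum, mul_assoc]
    · simp [h]
  have hBC : ptrA3 ρABC =
      (Matrix.blockDiagonal' fun i => (p i : ℂ) • (ptrA (ρ1 i) ⊗ₖ ρ2 i)).submatrix eBC eBC := by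
    ext x y
    obtain ⟨⟨i, b1, b2⟩, c⟩ := x
    obtain ⟨⟨j, b1', b2'⟩, c'⟩ := y
    simp only [ptrA3, Matrix.of_apply, Matrix.submatrix_apply]
    show _ = Matrix.blockDiagonal' _ ⟨i, _⟩ ⟨j, _⟩
    rw [Matrix.blockDiagonal'_apply']
    simp only [hρ]
    by_cases h : i = j
    · subst h
      simp only [dif_pos, cast_eq, Matrix.smul_apply, Matrix.kroneckerMap_apply, ptrA,
        Matrix.of_apply, smul_eq_mul, Finset.sum_mul, Finset.mul_sum]
      exact Finset.sum_congr rfl fun a _ => by ring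
    · simp [h]
  have hB : ptrB3 ρABC =
      (Matrix.blockDiagonal' fun i => (p i : ℂ) • (ptrA (ρ1 i) ⊗ₖ ptrB (ρ2 i))).submatrix
        eB eB := by
    ext x y
    obtain ⟨i, b1, b2⟩ := x
    obtain ⟨j, b1', b2'⟩ := y
    simp only [ptrB3, Matrix.of_apply, Matrix.submatrix_apply]
    show _ = Matrix.blockDiagonal' _ ⟨i, _⟩ ⟨j, _⟩
    rw [Matrix.blockDiagonal'_apply']
    simp only [hρ]
    by_cases h : i = j
    · subst h
      simp only [dif_pos, cast_eq, Matrix.smul_apply, Matrix.kroneckerMap_apply, ptrA, ptrB,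
        Matrix.of_apply, smul_eq_mul, Finset.sum_mul, Finset.mul_sum]
      rw [Finset.sum_comm]
      exact Finset.sum_congr rfl fun c _ => Finset.sum_congr rfl fun a _ => by ring
    · simp [h]
  -- entropies
  have hvABC := vN_blockKron (fun i => A × B1 i) (fun i => B2 i × C) eABC p
    ρ1 hH1 ρ2 hH2 ρABC hABC
  have hvAB := vN_blockKron (fun i => A × B1 i) (fun i => B2 i) eAB p
    ρ1 hH1 (fun i => ptrB (ρ2 i)) hσ2 (ptrC3 ρABC) hAB
  have hvBC := vN_blockKron (fun i => B1 i) (fun i => B2 i × C) eBC p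
    (fun i => ptrA (ρ1 i)) hσ1 ρ2 hH2 (ptrA3 ρABC) hBC
  have hvB := vN_blockKron (fun i => B1 i) (fun i => B2 i) eB p
    (fun i => ptrA (ρ1 i)) hσ1 (fun i => ptrB (ρ2 i)) hσ2 (ptrB3 ρABC) hB
  -- eigenvalue sums
  have hs1 : ∀ i, ∑ k, (hH1 i).eigenvalues k = 1 := fun i => sum_eig_eq_one _ (h1 i).2
  have hs2 : ∀ i, ∑ k, (hH2 i).eigenvalues k = 1 := fun i => sum_eig_eq_one _ (h2 i).2
  have ht1 : ∀ i, ∑ k, (hσ1 i).eigenvalues k = 1 := fun i =>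
    sum_eig_eq_one _ (by rw [ptrA_trace]; exact (h1 i).2)
  have ht2 : ∀ i, ∑ k, (hσ2 i).eigenvalues k = 1 := fun i =>
    sum_eig_eq_one _ (by rw [ptrB_trace]; exact (h2 i).2)
  rw [hvABC, hvAB, hvBC, hvB]
  have e1 : ∀ i : ι, ∑ k : A × B1 i, ∑ l : B2 i,
      φ (p i * (hH1 i).eigenvalues k * (hσ2 i).eigenvalues l) =
      φ (p i) + p i * (∑ k, φ ((hH1 i).eigenvalues k)) + p i * (∑ l, φ ((hσ2 i).eigenvalues l)) :=
    fun i => double_sum_phi _ _ _ (hs1 i) (ht2 i)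
  have e2 : ∀ i : ι, ∑ k : B1 i, ∑ l : B2 i × C,
      φ (p i * (hσ1 i).eigenvalues k * (hH2 i).eigenvalues l) =
      φ (p i) + p i * (∑ k, φ ((hσ1 i).eigenvalues k)) + p i * (∑ l, φ ((hH2 i).eigenvalues l)) :=
    fun i => double_sum_phi _ _ _ (ht1 i) (hs2 i)
  have e3 : ∀ i : ι, ∑ k : B1 i, ∑ l : B2 i,
      φ (p i * (hσ1 i).eigenvalues k * (hσ2 i).eigenvalues l) =
      φ (p i) + p i * (∑ k, φ ((hσ1 i).eigenvalues k)) + p i * (∑ l, φ ((hσ2 i).eigenvalues l)) :=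
    fun i => double_sum_phi _ _ _ (ht1 i) (ht2 i)
  have e4 : ∀ i : ι, ∑ k : A × B1 i, ∑ l : B2 i × C,
      φ (p i * (hH1 i).eigenvalues k * (hH2 i).eigenvalues l) =
      φ (p i) + p i * (∑ k, φ ((hH1 i).eigenvalues k)) + p i * (∑ l, φ ((hH2 i).eigenvalues l)) :=
    fun i => double_sum_phi _ _ _ (hs1 i) (hs2 i)
  simp only [e1, e2, e3, e4]
  have hsum : ∀ (f g : ι → ℝ), -∑ i, f i + -∑ i, g i = -∑ i, (f i + g i) := by
    intro f g
    rw [Finset.sum_add_distrib]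
    ring
  rw [hsum, hsum]
  congr 1
  apply Finset.sum_congr rfl
  intro i _
  ring
end
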